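/- Let Q(x, y) = A x² + B y² + 2 C x y with A, B, C ∈ ℤ be a positive definite binary quadratic form, and set D = A B − C². Let q be a positive integer with gcd(q, 2D) = 1, let s, t be integers with gcd(s t, q) = 1, and let m₁, m₂ be integers. Then | ∑*_{a mod q} ∑*_{β mod q} e( s ā β / q ) · ∑_{α₁ = 0}^{q−1} ∑_{α₂ = 0}^{q−1} e( −t ā ( Q(α₁, α₂) − m₁ α₁ − m₂ α₂ ) / q ) | ≤ q² · d(q), where d(q) denotes the number of positive divisors of q, ∑* means the sum runs over residues coprime to q, and ā is a multiplicative inverse of a modulo q. -/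

import Mathlib

/-- `e x = exp(2πix)`. -/
noncomputable def e (x : ℝ) : ℂ := Complex.exp (2 * Real.pi * Complex.I * x)

/-- A canonical multiplicative inverse modulo `q` of a natural number `a`. -/
def modInv (q a : ℕ) : ℤ := (((a : ZMod q)⁻¹).val : ℤ)

open Finset ArithmeticFunction
open scoped ArithmeticFunction.Moebius

namespace QFCS

variable {q : ℕ} [NeZero q]

lemma e_int (j : ℤ) : e ((j : ℝ) / (q : ℝ)) = ZMod.stdAddChar ((j : ℤ) : ZMod q) := by
  rw [ZMod.stdAddChar_coe, e]
  congr 1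
  push_cast
  ring

lemma psi_norm (x : ZMod q) : ‖ZMod.stdAddChar x‖ = 1 := by
  rw [ZMod.stdAddChar_apply, Circle.norm_coe]

lemma psi_conj (x : ZMod q) :
    (starRingEnd ℂ) (ZMod.stdAddChar x) = ZMod.stdAddChar (-x) := by
  rw [AddChar.map_neg_eq_inv, Complex.inv_eq_conj (psi_norm x)]

lemma orth (c : ZMod q) :
    ∑ x : ZMod q, ZMod.stdAddChar (c * x) = if c = 0 then (q : ℂ) else 0 := by
  split_ifs with h
  · simp only [h, zero_mul, AddChar.map_zero_eq_one, Finset.sum_const, Finset.card_univ,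
      ZMod.card, nsmul_eq_mul, mul_one]
  · exact AddChar.sum_eq_zero_of_ne_one (ZMod.isPrimitive_stdAddChar q h)

lemma sum_range_eq_sum_zmod (f : ZMod q → ℂ) :
    ∑ α ∈ Finset.range q, f ((α : ℕ) : ZMod q) = ∑ x : ZMod q, f x := by
  apply Finset.sum_nbij' (fun α => ((α : ℕ) : ZMod q)) (fun x => x.val)
  · intro a _; exact Finset.mem_univ _
  · intro x _; exact Finset.mem_range.2 (ZMod.val_lt x)
  · intro a ha; exact ZMod.val_cast_of_lt (Finset.mem_range.1 ha)
  · intro x _; exact ZMod.natCast_rightInverse x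
  · intro a _; rfl

lemma moeb_sum (n : ℕ) :
    ∑ d ∈ n.divisors, ((μ d : ℤ) : ℂ) = if n = 1 then 1 else 0 := by
  have h := congrArg (fun f : ArithmeticFunction ℤ => f n) moebius_mul_coe_zeta
  simp only [coe_mul_zeta_apply, one_apply] at h
  have := congrArg (fun z : ℤ => (z : ℂ)) h
  push_cast at this
  simpa using this

lemma geom_zero (d : ℕ) (hd : d ∈ Nat.divisors q) (hdq : d ≠ q) :
    ∑ k ∈ Finset.range (q / d), ZMod.stdAddChar (((d * k : ℕ) : ZMod q)) = 0 := by
  obtain ⟨hdvd, hq0⟩ := Nat.mem_divisors.1 hd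
  have hd0 : d ≠ 0 := fun h => hq0 (by subst h; exact (zero_dvd_iff.1 hdvd))
  set m := q / d with hm
  set z : ℂ := ZMod.stdAddChar ((d : ZMod q)) with hz
  have hterm : ∀ k : ℕ, ZMod.stdAddChar (((d * k : ℕ) : ZMod q)) = z ^ k := by
    intro k
    rw [hz, ← AddChar.map_nsmul_eq_pow]
    congr 1
    push_cast
    rw [nsmul_eq_mul]
    ring
  simp only [hterm]
  have hz1 : z ≠ 1 := by
    intro h
    have h' : ZMod.stdAddChar ((d : ZMod q)) = ZMod.stdAddChar (0 : ZMod q) := by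
      rw [← hz, h, AddChar.map_zero_eq_one]
    have : ((d : ℕ) : ZMod q) = 0 := ZMod.injective_stdAddChar h'
    rw [ZMod.natCast_eq_zero_iff] at this
    exact hdq (Nat.dvd_antisymm hdvd this)
  rw [geom_sum_eq hz1]
  have hzm : z ^ m = 1 := by
    rw [← AddChar.map_nsmul_eq_pow]
    have : m • ((d : ℕ) : ZMod q) = ((m * d : ℕ) : ZMod q) := by push_cast; rw [nsmul_eq_mul]
    rw [this, hm, Nat.div_mul_cancel hdvd, ZMod.natCast_self, AddChar.map_zero_eq_one]
  rw [hzm]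
  simp

lemma inner_div_sum (d : ℕ) (hd : d ∈ Nat.divisors q) :
    ∑ β ∈ (Finset.range q).filter (fun β => d ∣ β),
      ZMod.stdAddChar (((β : ℕ) : ZMod q))
    = if d = q then 1 else 0 := by
  obtain ⟨hdvd, hq0⟩ := Nat.mem_divisors.1 hd
  have hd0 : 0 < d := Nat.pos_of_ne_zero (fun h => hq0 (by subst h; exact zero_dvd_iff.1 hdvd))
  have key : ∑ β ∈ (Finset.range q).filter (fun β => d ∣ β),
      ZMod.stdAddChar (((β : ℕ) : ZMod q))
      = ∑ k ∈ Finset.range (q / d), ZMod.stdAddChar (((d * k : ℕ) : ZMod q)) := by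
    apply Finset.sum_nbij' (fun β => β / d) (fun k => d * k)
    · intro β hβ
      obtain ⟨hβq, hdβ⟩ := Finset.mem_filter.1 hβ
      exact Finset.mem_range.2 (Nat.div_lt_div_of_lt_of_dvd hdvd (Finset.mem_range.1 hβq))
    · intro k hk
      refine Finset.mem_filter.2 ⟨Finset.mem_range.2 ?_, Dvd.intro k rfl⟩
      calc d * k < d * (q / d) := (Nat.mul_lt_mul_left hd0).2 (Finset.mem_range.1 hk)
        _ = q := Nat.mul_div_cancel' hdvd
    · intro β hβ
      exact Nat.mul_div_cancel' (Finset.mem_filter.1 hβ).2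
    · intro k _
      exact Nat.mul_div_cancel_left k hd0
    · intro β hβ
      rw [Nat.mul_div_cancel' (Finset.mem_filter.1 hβ).2]
  rw [key]
  split_ifs with h
  · have h1 : q / d = 1 := by subst h; exact Nat.div_self hd0
    rw [h1]
    simp
  · exact geom_zero d hd h

lemma ramanujan :
    ∑ β ∈ (Finset.range q).filter (fun x => Nat.Coprime x q),
      ZMod.stdAddChar (((β : ℕ) : ZMod q)) = ((μ q : ℤ) : ℂ) := by
  have hq0 : q ≠ 0 := NeZero.ne q
  rw [Finset.sum_filter]
  have step1 : ∀ β ∈ Finset.range q,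
      (if Nat.Coprime β q then ZMod.stdAddChar (((β : ℕ) : ZMod q)) else 0)
      = ∑ d ∈ q.divisors.filter (fun d => d ∣ β),
          ((μ d : ℤ) : ℂ) * ZMod.stdAddChar (((β : ℕ) : ZMod q)) := by
    intro β _
    rw [← Finset.sum_mul]
    have hg0 : Nat.gcd β q ≠ 0 := fun h => hq0 (Nat.eq_zero_of_gcd_eq_zero_right h)
    have hdiv : q.divisors.filter (fun d => d ∣ β) = (Nat.gcd β q).divisors := by
      ext d
      simp only [Finset.mem_filter, Nat.mem_divisors, Nat.dvd_gcd_iff]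
      constructor
      · rintro ⟨⟨h1, h2⟩, h3⟩; exact ⟨⟨h3, h1⟩, hg0⟩
      · rintro ⟨⟨h1, h2⟩, h3⟩; exact ⟨⟨h2, hq0⟩, h1⟩
    rw [hdiv, moeb_sum _]
    by_cases h : Nat.Coprime β q
    · rw [if_pos h, if_pos h, one_mul]
    · rw [if_neg h, if_neg h, zero_mul]
  rw [Finset.sum_congr rfl step1]
  simp only [Finset.sum_filter]
  rw [Finset.sum_comm]
  have step2 : ∀ d ∈ q.divisors,
      (∑ β ∈ Finset.range q, if d ∣ β then
          ((μ d : ℤ) : ℂ) * ZMod.stdAddChar (((β : ℕ) : ZMod q)) else 0)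
      = ((μ d : ℤ) : ℂ) * (if d = q then 1 else 0) := by
    intro d hd
    rw [← Finset.sum_filter, ← Finset.mul_sum, inner_div_sum d hd]
  rw [Finset.sum_congr rfl step2]
  rw [Finset.sum_eq_single q (fun x _ hx => by rw [if_neg hx, mul_zero])
    (fun h => absurd (Nat.mem_divisors_self q hq0) h), if_pos rfl, mul_one]

lemma gauss_norm (u a b c l₁ l₂ : ZMod q) (hu : IsUnit u) (h2 : IsUnit (2 : ZMod q))
    (hdet : IsUnit (a * b - c ^ 2)) :
    ‖∑ x : ZMod q, ∑ y : ZMod q,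
        ZMod.stdAddChar (u * (a * x ^ 2 + b * y ^ 2 + 2 * c * x * y + l₁ * x + l₂ * y))‖
      = (q : ℝ) := by
  set f : ZMod q × ZMod q → ZMod q :=
    fun v => u * (a * v.1 ^ 2 + b * v.2 ^ 2 + 2 * c * v.1 * v.2 + l₁ * v.1 + l₂ * v.2) with hf
  have hsum : (∑ x : ZMod q, ∑ y : ZMod q,
      ZMod.stdAddChar (u * (a * x ^ 2 + b * y ^ 2 + 2 * c * x * y + l₁ * x + l₂ * y)))
      = ∑ v : ZMod q × ZMod q, ZMod.stdAddChar (f v) := by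
    rw [Fintype.sum_prod_type]
  rw [hsum]
  set S : ℂ := ∑ v : ZMod q × ZMod q, ZMod.stdAddChar (f v) with hS
  have key : S * (starRingEnd ℂ) S = (q : ℂ) ^ 2 := by
    have hconjS : (starRingEnd ℂ) S
        = ∑ w : ZMod q × ZMod q, ZMod.stdAddChar (- f w) := by
      rw [hS, map_sum]
      exact Finset.sum_congr rfl fun w _ => psi_conj _
    rw [hconjS, hS, Finset.sum_mul_sum]
    have hcomb : ∀ v w : ZMod q × ZMod q,
        ZMod.stdAddChar (f v) * ZMod.stdAddChar (- f w)
          = ZMod.stdAddChar (f v - f w) := by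
      intro v w
      rw [← AddChar.map_add_eq_mul, ← sub_eq_add_neg]
    simp only [hcomb]
    rw [Finset.sum_comm]
    have hre : ∀ w : ZMod q × ZMod q,
        (∑ v : ZMod q × ZMod q, ZMod.stdAddChar (f v - f w))
        = ∑ h : ZMod q × ZMod q, ZMod.stdAddChar (f (w + h) - f w) := by
      intro w
      exact (Equiv.sum_comp (Equiv.addLeft w) (fun v => ZMod.stdAddChar (f v - f w))).symm
    simp only [hre]
    rw [Finset.sum_comm]
    have hpoly : ∀ w h : ZMod q × ZMod q,
        f (w + h) - f w
          = f h + (2 * u * (a * h.1 + c * h.2)) * w.1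
              + (2 * u * (c * h.1 + b * h.2)) * w.2 := by
      intro w h
      simp only [hf, Prod.fst_add, Prod.snd_add]
      ring
    have hterm : ∀ h : ZMod q × ZMod q,
        (∑ w : ZMod q × ZMod q, ZMod.stdAddChar (f (w + h) - f w))
        = ZMod.stdAddChar (f h)
            * (if 2 * u * (a * h.1 + c * h.2) = 0 then (q : ℂ) else 0)
            * (if 2 * u * (c * h.1 + b * h.2) = 0 then (q : ℂ) else 0) := by
      intro h
      calc ∑ w : ZMod q × ZMod q, ZMod.stdAddChar (f (w + h) - f w)
          = ∑ w : ZMod q × ZMod q, ZMod.stdAddChar (f h)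
              * ZMod.stdAddChar ((2 * u * (a * h.1 + c * h.2)) * w.1)
              * ZMod.stdAddChar ((2 * u * (c * h.1 + b * h.2)) * w.2) := by
            refine Finset.sum_congr rfl fun w _ => ?_
            rw [hpoly w h, AddChar.map_add_eq_mul, AddChar.map_add_eq_mul]
        _ = (∑ w1 : ZMod q, ZMod.stdAddChar ((2 * u * (a * h.1 + c * h.2)) * w1))
              * (∑ w2 : ZMod q, ZMod.stdAddChar ((2 * u * (c * h.1 + b * h.2)) * w2))
              * ZMod.stdAddChar (f h) := by
            rw [Fintype.sum_prod_type]
            simp only [Finset.mul_sum, Finset.sum_mul]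
            rw [Finset.sum_comm]
            refine Finset.sum_congr rfl fun w1 _ => Finset.sum_congr rfl fun w2 _ => ?_
            ring
        _ = _ := by rw [orth, orth]; ring
    simp only [hterm]
    rw [Finset.sum_eq_single (0 : ZMod q × ZMod q)]
    · have hf0 : f 0 = 0 := by simp [hf]
      simp [hf0]
      ring
    · intro h _ hne
      by_cases hc1 : 2 * u * (a * h.1 + c * h.2) = 0
      · by_cases hc2 : 2 * u * (c * h.1 + b * h.2) = 0
        · exfalso
          have h2u : IsUnit (2 * u) := h2.mul hu
          have e1 : a * h.1 + c * h.2 = 0 := (h2u.mul_right_eq_zero).1 hc1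
          have e2 : c * h.1 + b * h.2 = 0 := (h2u.mul_right_eq_zero).1 hc2
          have e3 : (a * b - c ^ 2) * h.1 = 0 := by
            have : (a * b - c ^ 2) * h.1
                = b * (a * h.1 + c * h.2) - c * (c * h.1 + b * h.2) := by ring
            rw [this, e1, e2]; ring
          have e4 : (a * b - c ^ 2) * h.2 = 0 := by
            have : (a * b - c ^ 2) * h.2
                = a * (c * h.1 + b * h.2) - c * (a * h.1 + c * h.2) := by ring
            rw [this, e1, e2]; ring
          exact hne (Prod.ext ((hdet.mul_right_eq_zero).1 e3) ((hdet.mul_right_eq_zero).1 e4))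
        · rw [if_neg hc2, mul_zero]
      · rw [if_neg hc1, mul_zero, zero_mul]
    · intro hmem
      exact absurd (Finset.mem_univ _) hmem
  have hnormSq : Complex.normSq S = (q : ℝ) ^ 2 := by
    have := key
    rw [Complex.mul_conj] at this
    exact_mod_cast this
  have : ‖S‖ ^ 2 = (q : ℝ) ^ 2 := by
    rw [Complex.sq_norm, hnormSq]
  calc ‖S‖ = Real.sqrt (‖S‖ ^ 2) := (Real.sqrt_sq (norm_nonneg S)).symm
    _ = Real.sqrt ((q : ℝ) ^ 2) := by rw [this]
    _ = q := Real.sqrt_sq (Nat.cast_nonneg q)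

lemma modInv_cast (a : ℕ) : ((modInv q a : ℤ) : ZMod q) = ((a : ZMod q))⁻¹ := by
  simp only [modInv, Int.cast_natCast]
  exact ZMod.natCast_rightInverse _

lemma isUnit_intCast {z : ℤ} (h : IsCoprime z (q : ℤ)) : IsUnit ((z : ℤ) : ZMod q) := by
  obtain ⟨x, y, hxy⟩ := h
  apply IsUnit.of_mul_eq_one ((x : ℤ) : ZMod q)
  have := congrArg (fun n : ℤ => ((n : ℤ) : ZMod q)) hxy
  push_cast at this
  rw [ZMod.natCast_self] at this
  linear_combination this

lemma filter_sum_eq_unit_sum (g : ZMod q → ℂ) :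
    ∑ β ∈ (Finset.range q).filter (fun x => Nat.Coprime x q), g ((β : ℕ) : ZMod q)
      = ∑ v : (ZMod q)ˣ, g ((v : (ZMod q)ˣ) : ZMod q) := by
  apply Finset.sum_bij (fun β hβ => ZMod.unitOfCoprime β (Finset.mem_filter.1 hβ).2)
  · intro a ha; exact Finset.mem_univ _
  · intro β1 h1 β2 h2 heq
    have := congrArg (fun u : (ZMod q)ˣ => ((u : ZMod q).val)) heq
    simpa [ZMod.coe_unitOfCoprime,
      ZMod.val_cast_of_lt (Finset.mem_range.1 (Finset.mem_filter.1 h1).1),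
      ZMod.val_cast_of_lt (Finset.mem_range.1 (Finset.mem_filter.1 h2).1)] using this
  · intro v _
    refine ⟨((v : ZMod q)).val, Finset.mem_filter.2 ⟨Finset.mem_range.2 (ZMod.val_lt _),
      ZMod.val_coe_unit_coprime v⟩, ?_⟩
    apply Units.ext
    simp [ZMod.coe_unitOfCoprime, ZMod.natCast_rightInverse]
  · intro β hβ
    rw [ZMod.coe_unitOfCoprime]

lemma beta_bound (w : ZMod q) (hw : IsUnit w) :
    ‖∑ β ∈ (Finset.range q).filter (fun x => Nat.Coprime x q),
        ZMod.stdAddChar (w * ((β : ℕ) : ZMod q))‖ ≤ 1 := by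
  have h1 : ∑ β ∈ (Finset.range q).filter (fun x => Nat.Coprime x q),
      ZMod.stdAddChar (w * ((β : ℕ) : ZMod q))
      = ∑ v : (ZMod q)ˣ, ZMod.stdAddChar (w * ((v : (ZMod q)ˣ) : ZMod q)) :=
    filter_sum_eq_unit_sum (fun z => ZMod.stdAddChar (w * z))
  have h2 : ∑ v : (ZMod q)ˣ, ZMod.stdAddChar (w * ((v : (ZMod q)ˣ) : ZMod q))
      = ∑ v : (ZMod q)ˣ, ZMod.stdAddChar ((v : (ZMod q)ˣ) : ZMod q) := by
    have := Equiv.sum_comp (Equiv.mulLeft hw.unit)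
      (fun v : (ZMod q)ˣ => ZMod.stdAddChar ((v : (ZMod q)ˣ) : ZMod q))
    rw [← this]
    refine Finset.sum_congr rfl fun v _ => ?_
    simp only [Equiv.coe_mulLeft, Units.val_mul, hw.unit_spec]
  have h3 : ∑ v : (ZMod q)ˣ, ZMod.stdAddChar ((v : (ZMod q)ˣ) : ZMod q)
      = ((μ q : ℤ) : ℂ) := by
    rw [← filter_sum_eq_unit_sum (fun z => ZMod.stdAddChar z), ramanujan]
  rw [h1, h2, h3]
  rw [Complex.norm_intCast]
  exact_mod_cast abs_moebius_le_one

end QFCS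

open QFCS in
theorem quadratic_form_character_sum_bound (A B C : ℤ) (hA : 0 < A)
    (hD : 0 < A * B - C ^ 2) (q : ℕ) (hq : 0 < q)
    (hcop : Int.gcd (2 * (A * B - C ^ 2)) (q : ℤ) = 1)
    (s t : ℤ) (hst : Int.gcd (s * t) (q : ℤ) = 1) (m₁ m₂ : ℤ) :
    ‖∑ a ∈ (Finset.range q).filter (fun x => Nat.Coprime x q),
      ∑ β ∈ (Finset.range q).filter (fun x => Nat.Coprime x q),
        e (((s * modInv q a * (β : ℤ) : ℤ) : ℝ) / q) *
          ∑ α₁ ∈ Finset.range q, ∑ α₂ ∈ Finset.range q,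
            e (((-t * modInv q a *
              (A * (α₁ : ℤ) ^ 2 + B * (α₂ : ℤ) ^ 2 + 2 * C * α₁ * α₂ -
                m₁ * α₁ - m₂ * α₂) : ℤ) : ℝ) / q)‖ ≤
      (q : ℝ) ^ 2 * (q.divisors.card : ℝ) := by
  haveI : NeZero q := ⟨hq.ne'⟩
  -- coprimality facts
  have hcop' : IsCoprime (2 * (A * B - C ^ 2)) (q : ℤ) := Int.isCoprime_iff_gcd_eq_one.2 hcop
  have hst' : IsCoprime (s * t) (q : ℤ) := Int.isCoprime_iff_gcd_eq_one.2 hst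
  have h2 : IsUnit ((2 : ℤ) : ZMod q) := isUnit_intCast hcop'.of_mul_left_left
  have hdet : IsUnit (((A * B - C ^ 2 : ℤ)) : ZMod q) := isUnit_intCast hcop'.of_mul_left_right
  have hs : IsUnit ((s : ℤ) : ZMod q) := isUnit_intCast hst'.of_mul_left_left
  have ht : IsUnit ((t : ℤ) : ZMod q) := isUnit_intCast hst'.of_mul_left_right
  -- bound each outer term
  have main : ∀ a ∈ (Finset.range q).filter (fun x => Nat.Coprime x q),
      ‖∑ β ∈ (Finset.range q).filter (fun x => Nat.Coprime x q),
        e (((s * modInv q a * (β : ℤ) : ℤ) : ℝ) / q) *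
          ∑ α₁ ∈ Finset.range q, ∑ α₂ ∈ Finset.range q,
            e (((-t * modInv q a *
              (A * (α₁ : ℤ) ^ 2 + B * (α₂ : ℤ) ^ 2 + 2 * C * α₁ * α₂ -
                m₁ * α₁ - m₂ * α₂) : ℤ) : ℝ) / q)‖ ≤ 1 * q := by
    intro a ha
    have hacop : Nat.Coprime a q := (Finset.mem_filter.1 ha).2
    have haunit : IsUnit ((a : ℕ) : ZMod q) := (ZMod.isUnit_iff_coprime a q).2 hacop
    have hainv : IsUnit (((a : ℕ) : ZMod q))⁻¹ :=
      IsUnit.of_mul_eq_one _ (ZMod.inv_mul_of_unit _ haunit)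
    rw [← Finset.sum_mul, norm_mul]
    -- the β part
    have hβ : ‖∑ β ∈ (Finset.range q).filter (fun x => Nat.Coprime x q),
        e (((s * modInv q a * (β : ℤ) : ℤ) : ℝ) / q)‖ ≤ 1 := by
      have hrw : ∀ β : ℕ, e (((s * modInv q a * (β : ℤ) : ℤ) : ℝ) / q)
          = ZMod.stdAddChar (((s : ℤ) : ZMod q) * (((a : ℕ) : ZMod q))⁻¹
              * ((β : ℕ) : ZMod q)) := by
        intro β
        rw [e_int]
        congr 1
        push_cast [modInv_cast]
        ring
      simp only [hrw]
      have := beta_bound (q := q) (((s : ℤ) : ZMod q) * (((a : ℕ) : ZMod q))⁻¹)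
        (hs.mul hainv)
      simpa [mul_assoc] using this
    -- the Gauss part
    have hG : ‖∑ α₁ ∈ Finset.range q, ∑ α₂ ∈ Finset.range q,
        e (((-t * modInv q a *
          (A * (α₁ : ℤ) ^ 2 + B * (α₂ : ℤ) ^ 2 + 2 * C * α₁ * α₂ -
            m₁ * α₁ - m₂ * α₂) : ℤ) : ℝ) / q)‖ = q := by
      set u : ZMod q := (-(t : ℤ) : ZMod q) * (((a : ℕ) : ZMod q))⁻¹ with hu
      have hrw : ∀ α₁ α₂ : ℕ, e (((-t * modInv q a *
          (A * (α₁ : ℤ) ^ 2 + B * (α₂ : ℤ) ^ 2 + 2 * C * α₁ * α₂ -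
            m₁ * α₁ - m₂ * α₂) : ℤ) : ℝ) / q)
          = ZMod.stdAddChar (u * (((A : ℤ) : ZMod q) * ((α₁ : ℕ) : ZMod q) ^ 2
              + ((B : ℤ) : ZMod q) * ((α₂ : ℕ) : ZMod q) ^ 2
              + 2 * ((C : ℤ) : ZMod q) * ((α₁ : ℕ) : ZMod q) * ((α₂ : ℕ) : ZMod q)
              + (-(m₁ : ℤ) : ZMod q) * ((α₁ : ℕ) : ZMod q)
              + (-(m₂ : ℤ) : ZMod q) * ((α₂ : ℕ) : ZMod q))) := by
        intro α₁ α₂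
        rw [e_int]
        congr 1
        rw [hu]
        push_cast [modInv_cast]
        ring
      simp only [hrw]
      rw [sum_range_eq_sum_zmod (fun x => ∑ α₂ ∈ Finset.range q,
        ZMod.stdAddChar (u * (((A : ℤ) : ZMod q) * x ^ 2
          + ((B : ℤ) : ZMod q) * ((α₂ : ℕ) : ZMod q) ^ 2
          + 2 * ((C : ℤ) : ZMod q) * x * ((α₂ : ℕ) : ZMod q)
          + (-(m₁ : ℤ) : ZMod q) * x + (-(m₂ : ℤ) : ZMod q) * ((α₂ : ℕ) : ZMod q))))]
      have hinner : ∀ x : ZMod q, ∑ α₂ ∈ Finset.range q,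
          ZMod.stdAddChar (u * (((A : ℤ) : ZMod q) * x ^ 2
            + ((B : ℤ) : ZMod q) * ((α₂ : ℕ) : ZMod q) ^ 2
            + 2 * ((C : ℤ) : ZMod q) * x * ((α₂ : ℕ) : ZMod q)
            + (-(m₁ : ℤ) : ZMod q) * x + (-(m₂ : ℤ) : ZMod q) * ((α₂ : ℕ) : ZMod q)))
          = ∑ y : ZMod q, ZMod.stdAddChar (u * (((A : ℤ) : ZMod q) * x ^ 2
            + ((B : ℤ) : ZMod q) * y ^ 2
            + 2 * ((C : ℤ) : ZMod q) * x * y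
            + (-(m₁ : ℤ) : ZMod q) * x + (-(m₂ : ℤ) : ZMod q) * y)) := by
        intro x
        exact sum_range_eq_sum_zmod (fun y => ZMod.stdAddChar (u * (((A : ℤ) : ZMod q) * x ^ 2
          + ((B : ℤ) : ZMod q) * y ^ 2
          + 2 * ((C : ℤ) : ZMod q) * x * y
          + (-(m₁ : ℤ) : ZMod q) * x + (-(m₂ : ℤ) : ZMod q) * y)))
      simp only [hinner]
      have hu' : IsUnit u := by
        rw [hu]
        exact ht.neg.mul hainv
      have h2' : IsUnit (2 : ZMod q) := by
        have : ((2 : ℤ) : ZMod q) = (2 : ZMod q) := by push_cast; ring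
        rwa [this] at h2
      have hdet' : IsUnit (((A : ℤ) : ZMod q) * ((B : ℤ) : ZMod q)
          - ((C : ℤ) : ZMod q) ^ 2) := by
        have : (((A * B - C ^ 2 : ℤ)) : ZMod q)
            = ((A : ℤ) : ZMod q) * ((B : ℤ) : ZMod q) - ((C : ℤ) : ZMod q) ^ 2 := by
          push_cast; ring
        rwa [this] at hdet
      exact gauss_norm u _ _ _ _ _ hu' h2' hdet'
    rw [hG]
    exact mul_le_mul_of_nonneg_right hβ (Nat.cast_nonneg q)
  refine le_trans (norm_sum_le _ _) (le_trans (Finset.sum_le_sum main) ?_)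
  rw [Finset.sum_const, nsmul_eq_mul]
  have hcard : (((Finset.range q).filter (fun x => Nat.Coprime x q)).card : ℝ) ≤ q := by
    have := Finset.card_filter_le (Finset.range q) (fun x => Nat.Coprime x q)
    rw [Finset.card_range] at this
    exact_mod_cast this
  have hd1 : (1 : ℝ) ≤ (q.divisors.card : ℝ) := by
    have : 0 < q.divisors.card :=
      Finset.card_pos.2 ⟨q, Nat.mem_divisors_self q hq.ne'⟩
    exact_mod_cast this
  have hq0 : (0 : ℝ) ≤ (q : ℝ) := Nat.cast_nonneg q
  nlinarith [hcard, hd1, hq0]
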